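/- arXiv:1110.1546 — 2 statements merged into one kernel-verified Lean document; each statement's English description precedes it below -/
import Mathlib

section
/- For x = c_1 e_1 + c_2 e_2 + c_3 e_3 + c_4 e_4 in K[Z_4], x satisfies the polynomial equation x^4 - q_1(x) x^3 + q_2(x) x^2 - q_3(x) x + q_4(x)·1 = 0, where q_1(x) = 4c_1, q_2(x) = 6c_1^2 - 4c_2 c_4 - 2c_3^2, q_3(x) = 4c_1^3 - 8c_1 c_2 c_4 - 4c_1 c_3^2 + 4c_2^2 c_3 + 4c_3 c_4^2, and q_4(x) = c_1^4 - c_2^4 + c_3^4 - c_4^4 - 2c_1^2 c_3^2 - 4c_1^2 c_2 c_4 + 4c_1 c_2^2 c_3 + 4c_1 c_3 c_4^2 + 2c_2^2 c_4^2 - 4c_2 c_3^2 c_4. -/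
/-!
Write `x = α + g β` with `α = c₁ + c₃ g²` and `β = c₂ + c₄ g²`. Then `(x - α)² = g² β²`, and
using `g⁴ = 1` this quadratic relation over `K[g²]` reads `Y = g² Z` with `Y, Z ∈ K[x]`.
Squaring gives `Y² = Z²`, and `Y² - Z² = 0` is the quartic: the norm down the tower
`K ⊂ K[g²] ⊂ K[g]`.
-/

section PowFourEqOne

variable {R : Type*} [CommRing R] {g x : R} (c1 c2 c3 c4 : R)

theorem sq_sub_eq_of_pow_four_eq_one (hg : g ^ 4 = 1)
    (hx : x = c1 + c2 * g + c3 * g ^ 2 + c4 * g ^ 3) :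
    x ^ 2 - 2 * c1 * x + (c1 ^ 2 + c3 ^ 2 - 2 * c2 * c4) =
      g ^ 2 * (2 * c3 * x - (2 * c1 * c3 - c2 ^ 2 - c4 ^ 2)) := by
  subst hx
  linear_combination (c4 ^ 2 * g ^ 2 + 2 * c2 * c4 - c3 ^ 2) * hg

theorem quartic_of_pow_four_eq_one (hg : g ^ 4 = 1)
    (hx : x = c1 + c2 * g + c3 * g ^ 2 + c4 * g ^ 3) :
    x ^ 4 - 4 * c1 * x ^ 3 + (6 * c1 ^ 2 - 4 * c2 * c4 - 2 * c3 ^ 2) * x ^ 2 -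
      (4 * c1 ^ 3 - 8 * c1 * c2 * c4 - 4 * c1 * c3 ^ 2 + 4 * c2 ^ 2 * c3 + 4 * c3 * c4 ^ 2) * x +
      (c1 ^ 4 - c2 ^ 4 + c3 ^ 4 - c4 ^ 4 - 2 * c1 ^ 2 * c3 ^ 2 - 4 * c1 ^ 2 * c2 * c4 +
        4 * c1 * c2 ^ 2 * c3 + 4 * c1 * c3 * c4 ^ 2 + 2 * c2 ^ 2 * c4 ^ 2 -
        4 * c2 * c3 ^ 2 * c4) = 0 := by
  have hY := sq_sub_eq_of_pow_four_eq_one c1 c2 c3 c4 hg hx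
  set Y := x ^ 2 - 2 * c1 * x + (c1 ^ 2 + c3 ^ 2 - 2 * c2 * c4)
  set Z := 2 * c3 * x - (2 * c1 * c3 - c2 ^ 2 - c4 ^ 2)
  have hYZ : Y ^ 2 = Z ^ 2 := by linear_combination (Y + g ^ 2 * Z) * hY + Z ^ 2 * hg
  linear_combination hYZ

end PowFourEqOne

theorem AddMonoidAlgebra.single_one_zmod_four_pow_four {K : Type*} [CommRing K] :
    (single (1 : ZMod 4) (1 : K)) ^ 4 = 1 := by
  rw [single_pow, one_pow]
  rfl

theorem stmt6_general (K : Type*) [Field K] (c1 c2 c3 c4 : K) :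
    (c1 • AddMonoidAlgebra.single (0 : ZMod 4) (1 : K) +
     c2 • AddMonoidAlgebra.single (1 : ZMod 4) (1 : K) +
     c3 • AddMonoidAlgebra.single (2 : ZMod 4) (1 : K) +
     c4 • AddMonoidAlgebra.single (3 : ZMod 4) (1 : K)) ^ 4 -
    (4 * c1) • (c1 • AddMonoidAlgebra.single (0 : ZMod 4) (1 : K) +
     c2 • AddMonoidAlgebra.single (1 : ZMod 4) (1 : K) +
     c3 • AddMonoidAlgebra.single (2 : ZMod 4) (1 : K) +
     c4 • AddMonoidAlgebra.single (3 : ZMod 4) (1 : K)) ^ 3 +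
    (6 * c1 ^ 2 - 4 * c2 * c4 - 2 * c3 ^ 2) •
      (c1 • AddMonoidAlgebra.single (0 : ZMod 4) (1 : K) +
     c2 • AddMonoidAlgebra.single (1 : ZMod 4) (1 : K) +
     c3 • AddMonoidAlgebra.single (2 : ZMod 4) (1 : K) +
     c4 • AddMonoidAlgebra.single (3 : ZMod 4) (1 : K)) ^ 2 -
    (4 * c1 ^ 3 - 8 * c1 * c2 * c4 - 4 * c1 * c3 ^ 2 + 4 * c2 ^ 2 * c3 + 4 * c3 * c4 ^ 2) •
      (c1 • AddMonoidAlgebra.single (0 : ZMod 4) (1 : K) +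
     c2 • AddMonoidAlgebra.single (1 : ZMod 4) (1 : K) +
     c3 • AddMonoidAlgebra.single (2 : ZMod 4) (1 : K) +
     c4 • AddMonoidAlgebra.single (3 : ZMod 4) (1 : K)) +
    (c1 ^ 4 - c2 ^ 4 + c3 ^ 4 - c4 ^ 4 - 2 * c1 ^ 2 * c3 ^ 2 - 4 * c1 ^ 2 * c2 * c4 +
      4 * c1 * c2 ^ 2 * c3 + 4 * c1 * c3 * c4 ^ 2 + 2 * c2 ^ 2 * c4 ^ 2 -
      4 * c2 * c3 ^ 2 * c4) • (1 : AddMonoidAlgebra K (ZMod 4)) = 0 := by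
  set g := AddMonoidAlgebra.single (1 : ZMod 4) (1 : K)
  have hsingle (k : ℕ) : AddMonoidAlgebra.single (k : ZMod 4) (1 : K) = g ^ k := by
    rw [AddMonoidAlgebra.single_pow, one_pow, nsmul_one]
  rw [← Nat.cast_zero, ← Nat.cast_two, ← Nat.cast_ofNat (n := 3), hsingle, hsingle, hsingle,
    pow_zero]
  simp only [Algebra.smul_def, map_mul, map_add, map_sub, map_pow, map_ofNat, mul_one]
  exact quartic_of_pow_four_eq_one _ _ _ _
    AddMonoidAlgebra.single_one_zmod_four_pow_four rfl

/-- In `K[Z_4]`, `x = c₁e₁ + c₂e₂ + c₃e₃ + c₄e₄` satisfies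
`x⁴ - q₁(x)x³ + q₂(x)x² - q₃(x)x + q₄(x)·1 = 0` with the forms given explicitly. -/
theorem stmt6 (K : Type*) [Field K] [CharZero K] (c1 c2 c3 c4 : K) :
    (c1 • AddMonoidAlgebra.single (0 : ZMod 4) (1 : K) +
     c2 • AddMonoidAlgebra.single (1 : ZMod 4) (1 : K) +
     c3 • AddMonoidAlgebra.single (2 : ZMod 4) (1 : K) +
     c4 • AddMonoidAlgebra.single (3 : ZMod 4) (1 : K)) ^ 4 -
    (4 * c1) • (c1 • AddMonoidAlgebra.single (0 : ZMod 4) (1 : K) +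
     c2 • AddMonoidAlgebra.single (1 : ZMod 4) (1 : K) +
     c3 • AddMonoidAlgebra.single (2 : ZMod 4) (1 : K) +
     c4 • AddMonoidAlgebra.single (3 : ZMod 4) (1 : K)) ^ 3 +
    (6 * c1 ^ 2 - 4 * c2 * c4 - 2 * c3 ^ 2) •
      (c1 • AddMonoidAlgebra.single (0 : ZMod 4) (1 : K) +
     c2 • AddMonoidAlgebra.single (1 : ZMod 4) (1 : K) +
     c3 • AddMonoidAlgebra.single (2 : ZMod 4) (1 : K) +
     c4 • AddMonoidAlgebra.single (3 : ZMod 4) (1 : K)) ^ 2 -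
    (4 * c1 ^ 3 - 8 * c1 * c2 * c4 - 4 * c1 * c3 ^ 2 + 4 * c2 ^ 2 * c3 + 4 * c3 * c4 ^ 2) •
      (c1 • AddMonoidAlgebra.single (0 : ZMod 4) (1 : K) +
     c2 • AddMonoidAlgebra.single (1 : ZMod 4) (1 : K) +
     c3 • AddMonoidAlgebra.single (2 : ZMod 4) (1 : K) +
     c4 • AddMonoidAlgebra.single (3 : ZMod 4) (1 : K)) +
    (c1 ^ 4 - c2 ^ 4 + c3 ^ 4 - c4 ^ 4 - 2 * c1 ^ 2 * c3 ^ 2 - 4 * c1 ^ 2 * c2 * c4 +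
      4 * c1 * c2 ^ 2 * c3 + 4 * c1 * c3 * c4 ^ 2 + 2 * c2 ^ 2 * c4 ^ 2 -
      4 * c2 * c3 ^ 2 * c4) • (1 : AddMonoidAlgebra K (ZMod 4)) = 0 :=
  stmt6_general K c1 c2 c3 c4
end

section
/- With the transferred Hopf structure on C^n_ℂ, for a circulant matrix C = circ(c_1,...,c_n), the comultiplication Δ(C) = Σ_{k=1}^n c_k P_n^{k-1} ⊗ P_n^{k-1}, regarded as an n²×n² matrix via the Kronecker product, equals the block circulant with circulant blocks circ(c_1 I_n, c_2 P_n, ..., c_n P_n^{n-1}); moreover the eigenvalues of Δ(C) are exactly the eigenvalues of C, each with multiplicity n. -/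
/-!
Reindexing `ZMod n × ZMod n` by the shear `(i, k) ↦ (i, k + i)` turns `Δ(C)` into the
block-diagonal matrix with `n` copies of `C`, since the entry of `Δ(C)` at `(p, q)` is
`c (q.1 - p.1)` when `q.2 - p.2 = q.1 - p.1` and `0` otherwise. So `χ_{Δ(C)} = χ_C ^ n`.
Every additive character `ψ` of `ZMod n` is an eigenvector of `circ c` with eigenvalue
`∑ k, c k * ψ k`; the characters `k ↦ ψ (j * k)` of the standard character `ψ` are the
columns of the Fourier matrix, invertible by orthogonality, which diagonalizes `circ c`.
-/

open scoped BigOperators Kronecker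

open Complex Matrix Polynomial

def circ {n : ℕ} (c : ZMod n → ℂ) : Matrix (ZMod n) (ZMod n) ℂ :=
  Matrix.of fun i j => c (j - i)

/-- The fundamental circulant `P_n`. -/
def P (n : ℕ) : Matrix (ZMod n) (ZMod n) ℂ :=
  circ (fun k => if k = 1 then 1 else 0)

/-- The comultiplication of `C = circ c` transferred from `Δ(e_k) = e_k ⊗ e_k`:
`Δ(C) = Σ_k c_k P^{k-1} ⊗ P^{k-1}`, as an `n²×n²` matrix via the Kronecker product. -/
noncomputable def DeltaC {n : ℕ} [NeZero n] (c : ZMod n → ℂ) :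
    Matrix (ZMod n × ZMod n) (ZMod n × ZMod n) ℂ :=
  ∑ k : ZMod n, c k • ((P n ^ k.val) ⊗ₖ (P n ^ k.val))

namespace Matrix

variable {m o R : Type*} [Fintype m] [DecidableEq m] [Fintype o] [DecidableEq o] [CommRing R]

theorem charmatrix_blockDiagonal (M : o → Matrix m m R) :
    charmatrix (blockDiagonal M) = blockDiagonal fun k => charmatrix (M k) := by
  ext ⟨i, k⟩ ⟨j, l⟩
  by_cases hkl : k = l <;> by_cases hij : i = j <;> simp [blockDiagonal_apply, *]

theorem charpoly_blockDiagonal (M : o → Matrix m m R) :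
    (blockDiagonal M).charpoly = ∏ k, (M k).charpoly := by
  rw [charpoly, charmatrix_blockDiagonal, det_blockDiagonal]
  rfl

theorem charpoly_eq_of_mul_eq_mul {A B M : Matrix m m R} (hM : IsUnit M) (h : A * M = M * B) :
    A.charpoly = B.charpoly := by
  obtain ⟨u, rfl⟩ := hM
  have hA : A = u * B * u⁻¹ := by rw [← h, mul_assoc, Units.mul_inv, mul_one]
  rw [hA, coe_units_inv, charpoly_units_conj]

end Matrix

theorem P_pow_apply {n : ℕ} [NeZero n] (m : ℕ) (i j : ZMod n) :
    (P n ^ m) i j = if j - i = m then 1 else 0 := by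
  induction m generalizing j with
  | zero => simp [one_apply, sub_eq_zero, eq_comm]
  | succ m ih =>
    rw [pow_succ, mul_apply, Fintype.sum_eq_single (i + m)]
    · rw [ih, if_pos (add_sub_cancel_left _ _), one_mul, P, circ, of_apply]
      push_cast
      exact if_congr (by constructor <;> intro h <;> linear_combination h) rfl rfl
    · intro k hk
      rw [ih, if_neg (fun h => hk (by linear_combination h)), zero_mul]

section DeltaC

variable {n : ℕ} [NeZero n]

theorem DeltaC_apply (c : ZMod n → ℂ) (p q : ZMod n × ZMod n) :
    DeltaC c p q = if q.2 - p.2 = q.1 - p.1 then c (q.1 - p.1) else 0 := by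
  simp only [DeltaC, Matrix.sum_apply, Matrix.smul_apply, kroneckerMap_apply, P_pow_apply,
    ZMod.natCast_zmod_val, smul_eq_mul]
  rw [Fintype.sum_eq_single (q.1 - p.1) (fun k hk => by simp [Ne.symm hk])]
  simp

theorem DeltaC_eq_reindex_blockDiagonal (c : ZMod n → ℂ) :
    DeltaC c = reindex (Equiv.prodShear (Equiv.refl _) Equiv.addRight)
      (Equiv.prodShear (Equiv.refl _) Equiv.addRight) (blockDiagonal fun _ => circ c) := by
  ext p q
  simp only [DeltaC_apply, reindex_apply, submatrix_apply, blockDiagonal_apply]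
  simp only [Equiv.prodShear_symm_apply, Equiv.refl_symm, Equiv.refl_apply,
    Equiv.addRight_symm_apply, circ, of_apply]
  exact if_congr (by constructor <;> intro h <;> linear_combination -h) rfl rfl

end DeltaC

namespace ZMod

theorem stdAddChar_mul_eq_exp_pow {n : ℕ} [NeZero n] (j k : ZMod n) :
    stdAddChar (j * k) = Complex.exp (2 * Real.pi * I / n) ^ (k.val * j.val) := by
  have hjk : j * k = ((k.val * j.val : ℕ) : ZMod n) := by
    push_cast [ZMod.natCast_zmod_val]; ring
  rw [hjk, stdAddChar_apply, toCircle_natCast, ← Complex.exp_nat_mul]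
  ring_nf

end ZMod

section Circulant

open ZMod

variable {n : ℕ} [NeZero n]

noncomputable def fourierMatrix (n : ℕ) [NeZero n] : Matrix (ZMod n) (ZMod n) ℂ :=
  of fun i j => stdAddChar (j * i)

theorem circ_mulVec_addChar (c : ZMod n → ℂ) (ψ : AddChar (ZMod n) ℂ) :
    circ c *ᵥ ψ = (∑ k, c k * ψ k) • ⇑ψ := by
  ext i
  rw [mulVec, dotProduct, ← Equiv.sum_comp (Equiv.addLeft i), Pi.smul_apply, smul_eq_mul,
    Finset.sum_mul]
  refine Finset.sum_congr rfl fun k _ => ?_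
  simp only [circ, of_apply, Equiv.coe_addLeft, add_sub_cancel_left, AddChar.map_add_eq_mul]
  ring

theorem circ_mul_fourierMatrix (c : ZMod n → ℂ) :
    circ c * fourierMatrix n =
      fourierMatrix n * diagonal fun j => ∑ k, c k * stdAddChar (j * k) := by
  ext i j
  rw [mul_diagonal]
  simpa [fourierMatrix, mulVec, dotProduct, mul_apply, mul_comm] using
    congrFun (circ_mulVec_addChar c (stdAddChar.mulShift j)) i

theorem isUnit_fourierMatrix : IsUnit (fourierMatrix n) := by
  refine (isUnit_iff_isUnit_det _).2 (isUnit_det_of_right_inverse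
    (B := (n : ℂ)⁻¹ • of fun i j => stdAddChar (-(j * i))) ?_)
  ext i j
  have horth : ∑ k, stdAddChar (k * i) * stdAddChar (-(j * k)) =
      ((if i - j = 0 then Fintype.card (ZMod n) else 0 : ℕ) : ℂ) := by
    rw [← AddChar.sum_mulShift (i - j) (isPrimitive_stdAddChar n)]
    refine Finset.sum_congr rfl fun k _ => ?_
    rw [← AddChar.map_add_eq_mul]
    ring_nf
  rw [Matrix.mul_smul, Matrix.smul_apply, mul_apply]
  simp only [fourierMatrix, of_apply, horth, sub_eq_zero, one_apply, ZMod.card]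
  split_ifs <;> simp

theorem charpoly_circ (c : ZMod n → ℂ) :
    (circ c).charpoly = ∏ j, (X - C (∑ k, c k * stdAddChar (j * k))) := by
  rw [charpoly_eq_of_mul_eq_mul isUnit_fourierMatrix (circ_mul_fourierMatrix c),
    charpoly_diagonal]

end Circulant

/-- `Δ(C)` is the block circulant with circulant blocks `circ(c₁I, c₂P, ..., c_nP^{n-1})`,
and its eigenvalues are those of `C`, each with multiplicity `n`: its characteristic
polynomial is `∏_j (X - λ_j)^n` where `λ_j = p_C(ω^{j-1})`. -/
theorem stmt17 (n : ℕ) [NeZero n] (c : ZMod n → ℂ) :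
    DeltaC c = Matrix.of
      (fun p q : ZMod n × ZMod n => (c (q.1 - p.1) • P n ^ (q.1 - p.1).val) p.2 q.2) ∧
    (DeltaC c).charpoly = ∏ j : ZMod n,
      (X - C (∑ k : ZMod n, c k * Complex.exp (2 * Real.pi * I / n) ^ (k.val * j.val))) ^ n := by
  constructor
  · ext p q
    rw [DeltaC_apply, of_apply, Matrix.smul_apply, P_pow_apply, ZMod.natCast_zmod_val, smul_eq_mul,
      mul_ite, mul_one, mul_zero]
  · rw [DeltaC_eq_reindex_blockDiagonal, charpoly_reindex, charpoly_blockDiagonal,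
      charpoly_circ, Finset.prod_const, Finset.card_univ, ZMod.card, Finset.prod_pow]
    simp_rw [ZMod.stdAddChar_mul_eq_exp_pow]
end
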